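/- No nonempty prefix of the Thue–Morse word t is a square. -/

import Mathlib

/-- A square is a word of the form XX with X nonempty. -/
def IsSquare' {α : Type*} (w : List α) : Prop :=
  ∃ X : List α, X ≠ [] ∧ w = X ++ X

open Fin.NatCast

/-- The Thue–Morse word: the n-th letter (0-indexed) is the parity of the number
of 1s in the binary expansion of n. -/
def thueMorse (n : ℕ) : Fin 2 := ((Nat.digits 2 n).sum : Fin 2)

/-- The finite prefix of length n of an infinite word. -/
def wordPrefix {α : Type*} (s : ℕ → α) (n : ℕ) : List α := (List.range n).map s

/-!
A prefix of length `m + m` is a square exactly when `t (m + i) = t i` for all `i < m`. Using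
`t (2n) = t n` and `t (2n + 1) = t n + 1`: if `m = 2k` is even, restricting to even `i` gives the
same agreement for the shift `k`, so by descent it suffices to refute odd shifts; if `m = 2k + 1`,
comparing with the first letters `t 0 t 1 t 2 = 0 1 1` forces `t k = 1`, `t (k + 1) = 1` and
`t (k + 1) = 0`.
-/

theorem isSquare'_wordPrefix_iff {α : Type*} (s : ℕ → α) (n : ℕ) :
    IsSquare' (wordPrefix s n) ↔ ∃ m ≠ 0, n = m + m ∧ ∀ i < m, s (m + i) = s i := by
  constructor
  · rintro ⟨X, hX, hsq⟩
    have hn : n = X.length + X.length := by simpa [wordPrefix] using congrArg List.length hsq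
    refine ⟨X.length, by simpa using hX, hn, ?_⟩
    rw [hn, wordPrefix, List.range_add, List.map_append, List.map_map] at hsq
    obtain ⟨hfst, hsnd⟩ := List.append_inj hsq (by simp)
    exact fun i hi => List.map_inj_left.1 (hsnd.trans hfst.symm) i (List.mem_range.2 hi)
  · rintro ⟨m, hm, rfl, hshift⟩
    refine ⟨wordPrefix s m, by simpa [wordPrefix] using hm, ?_⟩
    rw [wordPrefix, List.range_add, List.map_append, List.map_map]
    congr 1
    exact List.map_inj_left.2 fun i hi => hshift i (List.mem_range.1 hi)

theorem thueMorse_zero : thueMorse 0 = 0 := rfl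

theorem thueMorse_two_mul (n : ℕ) : thueMorse (2 * n) = thueMorse n := by
  rcases Nat.eq_zero_or_pos n with rfl | hn
  · rfl
  · rw [thueMorse, Nat.digits_def' one_lt_two (by omega), Nat.mul_mod_right,
      Nat.mul_div_cancel_left n two_pos, List.sum_cons, zero_add]
    rfl

theorem thueMorse_two_mul_add_one (n : ℕ) : thueMorse (2 * n + 1) = thueMorse n + 1 := by
  rw [thueMorse, Nat.digits_def' one_lt_two (by omega), Nat.mul_add_mod_self_left,
    Nat.mul_add_div two_pos, List.sum_cons]
  simp [thueMorse, add_comm]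

theorem thueMorse_one : thueMorse 1 = 1 := thueMorse_two_mul_add_one 0

theorem exists_lt_thueMorse_two_mul_add_one_add_ne (k : ℕ) :
    ∃ i < 2 * k + 1, thueMorse (2 * k + 1 + i) ≠ thueMorse i := by
  rcases Nat.eq_zero_or_pos k with rfl | hk
  · exact ⟨0, one_pos, by decide⟩
  by_contra! hshift
  have h0 := hshift 0 (by omega)
  have h1 := hshift 1 (by omega)
  have h2 := hshift 2 (by omega)
  rw [add_zero, thueMorse_two_mul_add_one, thueMorse_zero] at h0
  rw [show 2 * k + 1 + 1 = 2 * (k + 1) by ring, thueMorse_two_mul, thueMorse_one] at h1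
  rw [show 2 * k + 1 + 2 = 2 * (k + 1) + 1 by ring, thueMorse_two_mul_add_one,
    thueMorse_two_mul 1, thueMorse_one] at h2
  revert h0 h1 h2
  generalize thueMorse k = a
  generalize thueMorse (k + 1) = b
  decide +revert

theorem exists_lt_thueMorse_add_ne (m : ℕ) (hm : m ≠ 0) :
    ∃ i < m, thueMorse (m + i) ≠ thueMorse i := by
  induction m using Nat.strong_induction_on with
  | _ m ih =>
    obtain ⟨k, rfl | rfl⟩ := Nat.even_or_odd' m
    · obtain ⟨i, hi, hne⟩ := ih k (by omega) (by omega)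
      refine ⟨2 * i, by omega, ?_⟩
      rwa [← mul_add, thueMorse_two_mul, thueMorse_two_mul]
    · exact exists_lt_thueMorse_two_mul_add_one_add_ne k

theorem no_thueMorse_prefix_is_square_general (n : ℕ) :
    ¬ IsSquare' (wordPrefix thueMorse n) := by
  intro hsq
  obtain ⟨m, hm, -, hshift⟩ := (isSquare'_wordPrefix_iff thueMorse n).1 hsq
  obtain ⟨i, hi, hne⟩ := exists_lt_thueMorse_add_ne m hm
  exact hne (hshift i hi)

theorem no_thueMorse_prefix_is_square (n : ℕ) (hn : n ≠ 0) :
    ¬ IsSquare' (wordPrefix thueMorse n) :=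
  no_thueMorse_prefix_is_square_general n
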